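/- arXiv:2512.04245 — 4 statements merged into one kernel-verified Lean document; each statement's English description precedes it below -/
import Mathlib

section
/- For integers N ≥ 1, M ≥ 1 and 0 ≤ K ≤ M, and for every real s ≥ 0, one has ∫₀ˢ σ^{K+N-1}/(1+σ)^{M+N+1} dσ = (1+s)^{-(M+N)} / A · Σ_{j=K+N}^{M+N} C(M+N, j) s^j, where A = (M-K+1) · C(M+N, K+N-1). -/
/-!
Let `T(x) = ∑_{j > k} C(b, j) x ^ j` be the tail of the binomial expansion of `(1 + x) ^ b`.
Then `T(σ) / ((b - k) C(b, k) (1 + σ) ^ b)` is the primitive of `σ ^ k / (1 + σ) ^ (b + 1)`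
vanishing at `0`: differentiating, this amounts to `(1 + x) T' - b T = (b - k) C(b, k) x ^ k`,
which telescopes because `(i + 1) C(b, i + 1) = (b - i) C(b, i)`.
-/

open MeasureTheory Finset

theorem Nat.cast_choose_succ_mul {R : Type*} [Ring R] {b i : ℕ} (hi : i ≤ b) :
    (b.choose (i + 1) : R) * (i + 1) = b.choose i * (b - i) := by
  have := congrArg (Nat.cast (R := R)) (Nat.choose_succ_right_eq b i)
  push_cast [Nat.cast_sub hi] at this
  exact this

noncomputable def binomialTail (b k : ℕ) (x : ℝ) : ℝ :=
  ∑ j ∈ Icc (k + 1) b, (b.choose j : ℝ) * x ^ j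

theorem binomialTail_eq_sum_Ico (b k : ℕ) (x : ℝ) :
    binomialTail b k x = ∑ i ∈ Ico k b, (b.choose (i + 1) : ℝ) * x ^ (i + 1) := by
  rw [binomialTail, ← Ico_add_one_right_eq_Icc, sum_Ico_add' (fun j ↦ (b.choose j : ℝ) * x ^ j)]

theorem binomialTail_zero (b k : ℕ) : binomialTail b k 0 = 0 := by
  simp [binomialTail_eq_sum_Ico]

theorem hasDerivAt_binomialTail (b k : ℕ) (x : ℝ) :
    HasDerivAt (binomialTail b k) (∑ i ∈ Ico k b, ((b : ℝ) - i) * b.choose i * x ^ i) x := by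
  rw [funext (binomialTail_eq_sum_Ico b k)]
  refine (HasDerivAt.fun_sum fun i _ ↦
    (hasDerivAt_pow (i + 1) x).const_mul (b.choose (i + 1) : ℝ)).congr_deriv (sum_congr rfl ?_)
  intro i hi
  rw [Nat.add_sub_cancel, ← mul_assoc, Nat.cast_succ,
    Nat.cast_choose_succ_mul (mem_Ico.mp hi).2.le]
  ring

theorem one_add_mul_deriv_binomialTail_sub {b k : ℕ} (hkb : k ≤ b) (x : ℝ) :
    (1 + x) * ∑ i ∈ Ico k b, ((b : ℝ) - i) * b.choose i * x ^ i - b * binomialTail b k x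
      = ((b : ℝ) - k) * b.choose k * x ^ k := by
  set h : ℕ → ℝ := fun i ↦ ((b : ℝ) - i) * b.choose i * x ^ i
  have hterm : ∀ i ∈ Ico k b, (1 + x) * h i - b * ((b.choose (i + 1) : ℝ) * x ^ (i + 1))
      = -(h (i + 1) - h i) := by
    intro i hi
    have := Nat.cast_choose_succ_mul (R := ℝ) (mem_Ico.mp hi).2.le
    simp only [h]
    push_cast
    linear_combination -x ^ (i + 1) * this
  rw [binomialTail_eq_sum_Ico, mul_sum, mul_sum, ← sum_sub_distrib, sum_congr rfl hterm,
    sum_neg_distrib, sum_Ico_sub h hkb]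
  simp [h]

theorem HasDerivAt.div_one_add_pow {f : ℝ → ℝ} {f' x : ℝ} (hf : HasDerivAt f f' x)
    (hx : 1 + x ≠ 0) (n : ℕ) :
    HasDerivAt (fun y ↦ f y / (1 + y) ^ n) (((1 + x) * f' - n * f x) / (1 + x) ^ (n + 1)) x := by
  have hpow : HasDerivAt (fun y : ℝ ↦ (1 + y) ^ n) (n * (1 + x) ^ (n - 1) * 1) x :=
    ((hasDerivAt_id x).const_add 1).pow n
  refine (hf.fun_div hpow (pow_ne_zero n hx)).congr_deriv ?_
  rcases n with _ | n
  · simp [mul_div_cancel_left₀ _ hx]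
  · rw [Nat.add_sub_cancel]
    field_simp
    ring

theorem integral_pow_div_one_add_pow {b k : ℕ} (hkb : k < b) {s : ℝ} (hs : -1 < s) :
    ∫ σ in (0 : ℝ)..s, σ ^ k / (1 + σ) ^ (b + 1)
      = ((1 + s) ^ b)⁻¹ / (((b : ℝ) - k) * b.choose k) * binomialTail b k s := by
  have hA : ((b : ℝ) - k) * b.choose k ≠ 0 := by
    have : (k : ℝ) < b := by exact_mod_cast hkb
    have := Nat.choose_pos hkb.le
    positivity
  have hpos : ∀ σ ∈ Set.uIcc 0 s, 1 + σ ≠ 0 := fun σ hσ ↦ by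
    have : -1 < min 0 s := lt_min (by norm_num) hs
    linarith [hσ.1]
  have hderiv : ∀ σ ∈ Set.uIcc 0 s, HasDerivAt
      (fun y ↦ binomialTail b k y / (1 + y) ^ b / (((b : ℝ) - k) * b.choose k))
      (σ ^ k / (1 + σ) ^ (b + 1)) σ := fun σ hσ ↦ by
    refine (((hasDerivAt_binomialTail b k σ).div_one_add_pow (hpos σ hσ) b).div_const _
      ).congr_deriv ?_
    rw [one_add_mul_deriv_binomialTail_sub hkb.le, div_div,
      mul_comm ((1 + σ) ^ (b + 1)), mul_div_mul_left _ _ hA]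
  have hint : IntervalIntegrable (fun σ : ℝ ↦ σ ^ k / (1 + σ) ^ (b + 1)) volume 0 s :=
    (ContinuousOn.div (by fun_prop) (by fun_prop) fun σ hσ ↦
      pow_ne_zero _ (hpos σ hσ)).intervalIntegrable
  rw [intervalIntegral.integral_eq_sub_of_hasDerivAt hderiv hint, binomialTail_zero]
  simp only [zero_div, sub_zero]
  ring

theorem stmt_0_general (N M K : ℕ) (hN : 1 ≤ N) (hK : K ≤ M) (s : ℝ) (hs : 0 ≤ s) :
    ∫ σ in (0:ℝ)..s, σ ^ (K + N - 1) / (1 + σ) ^ (M + N + 1)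
      = ((1 + s) ^ (M + N))⁻¹ / ((M - K + 1) * Nat.choose (M + N) (K + N - 1) : ℝ)
        * ∑ j ∈ Finset.Icc (K + N) (M + N), (Nat.choose (M + N) j : ℝ) * s ^ j := by
  have hk : K + N - 1 + 1 = K + N := by omega
  rw [integral_pow_div_one_add_pow (by omega) (by linarith), binomialTail, hk]
  congr 3
  push_cast [Nat.cast_sub (show 1 ≤ K + N by omega)]
  ring

theorem stmt_0 (N M K : ℕ) (hN : 1 ≤ N) (hM : 1 ≤ M) (hK : K ≤ M) (s : ℝ) (hs : 0 ≤ s) :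
    ∫ σ in (0:ℝ)..s, σ ^ (K + N - 1) / (1 + σ) ^ (M + N + 1)
      = ((1 + s) ^ (M + N))⁻¹ / ((M - K + 1) * Nat.choose (M + N) (K + N - 1) : ℝ)
        * ∑ j ∈ Finset.Icc (K + N) (M + N), (Nat.choose (M + N) j : ℝ) * s ^ j :=
  stmt_0_general N M K hN hK s hs
end

section
/- Let Φ ∈ C²([0,1]) be convex and strictly convex somewhere on (a,1) for some a ∈ (0,1) (i.e., Φ'' ≥ 0 and Φ'' > 0 on a set of positive measure in (a,1)). With A_{M,N,k} = (M-k+1)·C(M+N,k+N-1), for each multi-index α with 2 ≤ |α| ≤ M the quantity b_α = N ∫₀^∞ Φ''((1+s)^{-M}) · c̃_α²/(1+s)^{2M+N+1} · [s^{|α|+N-1} - (M/A_{M,N,|α|}) Σ_{j=N}^{|α|+N-1} C(M+N,j) s^j] ds is strictly negative, where c̃_α² = A_{M,N,|α|}/A_{M,N,0}. -/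
/-!
The integrand is `Φ''((1+s)^{-M})` times the weight `w(s) = c̃² (1+s)^{-(2M+N+1)} P(s)`, where the
coefficient of the top power `s^{|α|+N-1}` in the sum part of `P` is `M / (M-|α|+1) > 1`; hence
`P(s) < s^{|α|+N-1} - (M/(M-|α|+1)) s^{|α|+N-1} < 0` for `s > 0`, and the integrand is `≤ 0` by
convexity. It is `< 0` on the preimage of `{Φ'' > 0} ∩ (a,1)` under `s ↦ (1+s)^{-M}`, which has
positive measure because this map is Lipschitz on `[0,∞)` and onto `(0,1)`, and Lipschitz maps
do not increase Lebesgue (= one-dimensional Hausdorff) measure. Integrability holds since `Φ''` is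
bounded on `(0,1)` and `deg P ≤ 2M+N-1`.
-/

open MeasureTheory Set
open scoped NNReal

theorem exists_abs_deriv_deriv_le_of_contDiffOn_Icc {f : ℝ → ℝ} {a b : ℝ} (hab : a < b)
    (hf : ContDiffOn ℝ 2 f (Icc a b)) : ∃ C, ∀ x ∈ Ioo a b, |deriv (deriv f) x| ≤ C := by
  obtain ⟨C, hC⟩ := isCompact_Icc.exists_bound_of_continuousOn
    (hf.continuousOn_iteratedDerivWithin le_rfl (uniqueDiffOn_Icc hab))
  refine ⟨C, fun x hx => ?_⟩
  have hxI : x ∈ Icc a b := Ioo_subset_Icc_self hx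
  have hfx : ContDiffAt ℝ 2 f x := hf.contDiffAt (Icc_mem_nhds hx.1 hx.2)
  have := hC x hxI
  rwa [iteratedDerivWithin_eq_iteratedDeriv (uniqueDiffOn_Icc hab) hfx hxI,
    iteratedDeriv_succ, iteratedDeriv_one, Real.norm_eq_abs] at this

theorem pow_sub_mul_sum_neg {S : Finset ℕ} {b : ℕ → ℝ} {e : ℕ} {l s : ℝ}
    (hb : ∀ j ∈ S, 0 ≤ b j) (he : e ∈ S) (hl : 1 < l * b e) (hs : 0 < s) :
    s ^ e - l * ∑ j ∈ S, b j * s ^ j < 0 := by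
  have hl0 : 0 ≤ l := by nlinarith [hb e he]
  have hse : 0 < s ^ e := pow_pos hs e
  have hsum : b e * s ^ e ≤ ∑ j ∈ S, b j * s ^ j :=
    Finset.single_le_sum (f := fun j => b j * s ^ j)
      (fun j hj => mul_nonneg (hb j hj) (pow_nonneg hs.le j)) he
  nlinarith [mul_le_mul_of_nonneg_left hsum hl0]

theorem integrableOn_Ioi_pow_div_one_add_pow {j m : ℕ} (h : j + 2 ≤ m) :
    IntegrableOn (fun s : ℝ => s ^ j / (1 + s) ^ m) (Ioi 0) := by
  refine integrable_inv_one_add_sq.integrableOn.mono'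
    (Measurable.aestronglyMeasurable (by fun_prop)) ?_
  filter_upwards [ae_restrict_mem measurableSet_Ioi] with s (hs : 0 < s)
  have h1s : 1 ≤ 1 + s := by linarith
  rw [Real.norm_of_nonneg (by positivity), div_le_iff₀ (by positivity), ← div_eq_inv_mul,
    le_div_iff₀ (by positivity)]
  calc s ^ j * (1 + s ^ 2) ≤ (1 + s) ^ j * (1 + s) ^ 2 := by
        gcongr
        · linarith
        · nlinarith
    _ ≤ (1 + s) ^ j * (1 + s) ^ (m - j) :=
        mul_le_mul_of_nonneg_left (pow_le_pow_right₀ h1s (by omega)) (by positivity)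
    _ = (1 + s) ^ m := by rw [← pow_add]; congr 1; omega

theorem integrableOn_Ioi_div_one_add_pow_mul_sub {S : Finset ℕ} {b : ℕ → ℝ} {e m : ℕ}
    (c l : ℝ) (hS : ∀ j ∈ S, j ≤ e) (hm : e + 2 ≤ m) :
    IntegrableOn (fun s : ℝ => c / (1 + s) ^ m * (s ^ e - l * ∑ j ∈ S, b j * s ^ j))
      (Ioi 0) := by
  have hterm : ∀ j ≤ e, IntegrableOn (fun s : ℝ => s ^ j / (1 + s) ^ m) (Ioi 0) :=
    fun j hj => integrableOn_Ioi_pow_div_one_add_pow (by omega)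
  have hsum := integrable_finsetSum S fun j hj => (hterm j (hS j hj)).const_mul (c * l * b j)
  refine IntegrableOn.congr_fun (((hterm e le_rfl).const_mul c).sub hsum) (fun s _ => ?_)
    measurableSet_Ioi
  simp only [Pi.sub_apply, mul_sub, Finset.mul_sum]
  congr 1
  · ring
  · exact Finset.sum_congr rfl fun j _ => by ring

theorem LipschitzOnWith.volume_inter_preimage_pos {φ : ℝ → ℝ} {K : ℝ≥0} {T E : Set ℝ}
    (hφ : LipschitzOnWith K φ T) (hE : E ⊆ φ '' T) (h : 0 < volume E) :
    0 < volume (T ∩ φ ⁻¹' E) := by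
  have himg : φ '' (T ∩ φ ⁻¹' E) = E := by
    rw [image_inter_preimage, inter_eq_right.2 hE]
  have hle := (hφ.mono (inter_subset_left (t := φ ⁻¹' E))).hausdorffMeasure_image_le zero_le_one
  rw [himg, hausdorffMeasure_real] at hle
  refine pos_iff_ne_zero.2 fun h0 => h.ne' (le_zero_iff.1 ?_)
  simpa [h0] using hle

theorem lipschitzOnWith_inv_one_add_pow (M : ℕ) :
    LipschitzOnWith M (fun s : ℝ => ((1 + s) ^ M)⁻¹) (Ici 0) := by
  refine (convex_Ici 0).lipschitzOnWith_of_nnnorm_hasDerivWithin_le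
    (f' := fun s : ℝ => -((M : ℝ) * (1 + s) ^ (M - 1) * 1) / ((1 + s) ^ M) ^ 2)
    (fun s (hs : 0 ≤ s) => (((hasDerivAt_id' s).const_add 1).pow M).inv
      (pow_ne_zero _ (by linarith)) |>.hasDerivWithinAt)
    (fun s (hs : 0 ≤ s) => ?_)
  have h1s : 1 ≤ 1 + s := by linarith
  rw [← NNReal.coe_le_coe, coe_nnnorm, Real.norm_eq_abs, abs_div, abs_neg,
    abs_of_nonneg (by positivity), abs_of_pos (by positivity), div_le_iff₀ (by positivity),
    NNReal.coe_natCast, mul_one]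
  have : (1 + s) ^ (M - 1) ≤ ((1 + s) ^ M) ^ 2 := by
    rw [← pow_mul]; exact pow_le_pow_right₀ h1s (by omega)
  exact mul_le_mul_of_nonneg_left this M.cast_nonneg

theorem mapsTo_inv_one_add_pow {M : ℕ} (hM : M ≠ 0) :
    MapsTo (fun s : ℝ => ((1 + s) ^ M)⁻¹) (Ioi 0) (Ioo 0 1) := fun s (hs : 0 < s) =>
  ⟨by positivity, inv_lt_one_of_one_lt₀ (one_lt_pow₀ (by linarith) hM)⟩

theorem Ioo_subset_image_inv_one_add_pow {M : ℕ} (hM : M ≠ 0) :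
    Ioo 0 1 ⊆ (fun s : ℝ => ((1 + s) ^ M)⁻¹) '' Ioi 0 := by
  intro t ⟨ht0, ht1⟩
  have hroot : 1 < t⁻¹ ^ (M⁻¹ : ℝ) :=
    Real.one_lt_rpow (one_lt_inv₀ ht0 |>.2 ht1) (by positivity)
  refine ⟨t⁻¹ ^ (M⁻¹ : ℝ) - 1, by simpa using hroot, ?_⟩
  simp only [add_sub_cancel, Real.rpow_inv_natCast_pow (inv_nonneg.2 ht0.le) hM, inv_inv]

theorem setIntegral_comp_mul_neg {φ g w : ℝ → ℝ} {T I : Set ℝ} {K : ℝ≥0} {C : ℝ}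
    (hT : MeasurableSet T) (hφm : Measurable φ) (hφ : LipschitzOnWith K φ T)
    (hmaps : MapsTo φ T I) (hsurj : I ⊆ φ '' T) (hgm : Measurable g)
    (hg0 : ∀ t ∈ I, 0 ≤ g t) (hgC : ∀ t ∈ I, |g t| ≤ C)
    (hgpos : 0 < volume {t | t ∈ I ∧ 0 < g t})
    (hw : IntegrableOn w T) (hwneg : ∀ s ∈ T, w s < 0) :
    ∫ s in T, g (φ s) * w s < 0 := by
  have hint : IntegrableOn (fun s => g (φ s) * w s) T :=
    hw.bdd_mul (hgm.comp hφm).aestronglyMeasurable <| by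
      filter_upwards [ae_restrict_mem hT] with s hs
      exact hgC _ (hmaps hs)
  have hsub : T ∩ φ ⁻¹' {t | t ∈ I ∧ 0 < g t} ⊆
      (Function.support fun s => -(g (φ s) * w s)) ∩ T :=
    fun s ⟨hs, hgs⟩ => ⟨(neg_pos.2 (mul_neg_of_pos_of_neg hgs.2 (hwneg s hs))).ne', hs⟩
  have hpos : 0 < ∫ s in T, -(g (φ s) * w s) := by
    refine (integral_pos_iff_support_of_nonneg_ae ?_ hint.neg).2 ?_
    · filter_upwards [ae_restrict_mem hT] with s hs
      exact neg_nonneg.2 (mul_nonpos_of_nonneg_of_nonpos (hg0 _ (hmaps hs)) (hwneg s hs).le)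
    · rw [Measure.restrict_apply' hT]
      exact (hφ.volume_inter_preimage_pos (fun t ht => hsurj ht.1) hgpos).trans_le
        (measure_mono hsub)
  rw [integral_neg] at hpos
  exact neg_pos.1 hpos

theorem stmt_13 (N M : ℕ) (hN : 1 ≤ N) (hM : 1 ≤ M) (α : Fin N → ℕ)
    (h2 : 2 ≤ ∑ i, α i) (hα : ∑ i, α i ≤ M)
    (a : ℝ) (ha : a ∈ Set.Ioo (0:ℝ) 1) (Φ : ℝ → ℝ)
    (hC2 : ContDiffOn ℝ 2 Φ (Set.Icc 0 1))
    (hconv : ∀ t ∈ Set.Icc (0:ℝ) 1, 0 ≤ deriv (deriv Φ) t)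
    (hpos : 0 < volume {t : ℝ | t ∈ Set.Ioo a 1 ∧ 0 < deriv (deriv Φ) t}) :
    (N : ℝ) * ∫ s in Set.Ioi (0:ℝ),
        deriv (deriv Φ) (((1 + s) ^ M)⁻¹)
          * ((((M - (∑ i, α i) + 1) * Nat.choose (M + N) ((∑ i, α i) + N - 1) : ℕ) : ℝ)
              / (((M + 1) * Nat.choose (M + N) (N - 1) : ℕ) : ℝ))
          / (1 + s) ^ (2 * M + N + 1)
          * (s ^ ((∑ i, α i) + N - 1)
              - (M : ℝ) / (((M - (∑ i, α i) + 1) * Nat.choose (M + N) ((∑ i, α i) + N - 1) : ℕ) : ℝ)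
                * ∑ j ∈ Finset.Icc N ((∑ i, α i) + N - 1), (Nat.choose (M + N) j : ℝ) * s ^ j)
      < 0 := by
  set k := ∑ i, α i
  set A := (((M - k + 1) * Nat.choose (M + N) (k + N - 1) : ℕ) : ℝ) with hA
  have hchoose : (0 : ℝ) < Nat.choose (M + N) (k + N - 1) := by
    exact_mod_cast Nat.choose_pos (by omega)
  have hratio : 1 < (M : ℝ) / A * Nat.choose (M + N) (k + N - 1) := by
    have hlt : ((M - k + 1 : ℕ) : ℝ) < M := by exact_mod_cast (by omega : M - k + 1 < M)
    rw [hA, Nat.cast_mul, div_mul_eq_mul_div, mul_div_mul_right _ _ hchoose.ne',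
      one_lt_div (by positivity)]
    exact hlt
  have hc : (0 : ℝ) < A / (((M + 1) * Nat.choose (M + N) (N - 1) : ℕ) : ℝ) := by
    have : 0 < A := by rw [hA, Nat.cast_mul]; exact mul_pos (by positivity) hchoose
    have : 0 < Nat.choose (M + N) (N - 1) := Nat.choose_pos (by omega)
    positivity
  obtain ⟨C, hC⟩ := exists_abs_deriv_deriv_le_of_contDiffOn_Icc one_pos hC2
  have hneg := setIntegral_comp_mul_neg measurableSet_Ioi (by fun_prop)
    ((lipschitzOnWith_inv_one_add_pow M).mono Ioi_subset_Ici_self)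
    (mapsTo_inv_one_add_pow (by omega)) (Ioo_subset_image_inv_one_add_pow (by omega))
    (measurable_deriv _) (fun t ht => hconv t (Ioo_subset_Icc_self ht)) hC
    (hpos.trans_le (measure_mono fun t ⟨ht, hdt⟩ => ⟨⟨ha.1.trans ht.1, ht.2⟩, hdt⟩))
    (integrableOn_Ioi_div_one_add_pow_mul_sub (e := k + N - 1) (m := 2 * M + N + 1) _ _
      (fun j hj => (Finset.mem_Icc.1 hj).2) (by omega))
    (fun s (hs : 0 < s) => mul_neg_of_pos_of_neg (div_pos hc (by positivity))
      (pow_sub_mul_sum_neg (S := Finset.Icc N (k + N - 1)) (fun j _ => Nat.cast_nonneg _)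
        (Finset.right_mem_Icc.2 (by omega)) hratio hs))
  refine mul_neg_of_pos_of_neg (by exact_mod_cast hN) ?_
  simpa only [mul_div_assoc, mul_assoc] using hneg
end

section
/- For every s > 0, for multi-index length k with 2 ≤ k ≤ M, the polynomial expression s^{k+N-1} - (M/(M-k+1)) · (1/C(M+N,k+N-1)) · Σ_{j=N}^{k+N-1} C(M+N,j) s^j is strictly negative; in particular, the coefficient of the top monomial s^{k+N-1} in the bracketed polynomial is 1 - M/(M-k+1) < 0, and all other coefficients of the subtracted sum are positive. -/
/-!
Drop from the sum every term but the top one, `C(M+N, k+N-1) s^(k+N-1)`: the normalised sum is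
then at least `s^(k+N-1)`, and the factor `M/(M-k+1)` is strictly larger than `1` once `k ≥ 2`.
-/

lemma one_lt_div_sub_add_one {M k : ℕ} (hk : 2 ≤ k) (hkM : k ≤ M) :
    1 < (M : ℝ) / ((M - k + 1 : ℕ) : ℝ) := by
  have hpos : (0 : ℝ) < ((M - k + 1 : ℕ) : ℝ) := by positivity
  rw [one_lt_div hpos]
  exact_mod_cast (by omega : M - k + 1 < M)

lemma pow_le_one_div_mul_sum {t : Finset ℕ} {c : ℕ → ℝ} {s : ℝ} {n : ℕ} (hn : n ∈ t)
    (hcn : 0 < c n) (hc : ∀ j ∈ t, 0 ≤ c j) (hs : 0 ≤ s) :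
    s ^ n ≤ 1 / c n * ∑ j ∈ t, c j * s ^ j := by
  have hterm : c n * s ^ n ≤ ∑ j ∈ t, c j * s ^ j :=
    Finset.single_le_sum (f := fun j => c j * s ^ j)
      (fun j hj => mul_nonneg (hc j hj) (pow_nonneg hs j)) hn
  rw [one_div, inv_mul_eq_div, le_div_iff₀ hcn]
  linarith

theorem stmt_14_general (N M k : ℕ) (hk2 : 2 ≤ k) (hkM : k ≤ M)
    (s : ℝ) (hs : 0 < s) :
    s ^ (k + N - 1) - (M : ℝ) / ((M - k + 1 : ℕ) : ℝ) * (1 / (Nat.choose (M + N) (k + N - 1) : ℝ))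
        * ∑ j ∈ Finset.Icc N (k + N - 1), (Nat.choose (M + N) j : ℝ) * s ^ j < 0
    ∧ 1 - (M : ℝ) / ((M - k + 1 : ℕ) : ℝ) < 0
    ∧ ∀ j ∈ Finset.Icc N (k + N - 1), 0 < (Nat.choose (M + N) j : ℝ) := by
  have hchoose : ∀ j ∈ Finset.Icc N (k + N - 1), 0 < (Nat.choose (M + N) j : ℝ) := by
    intro j hj
    have hj : j ≤ k + N - 1 := (Finset.mem_Icc.mp hj).2
    exact_mod_cast Nat.choose_pos (by omega)
  have htop : k + N - 1 ∈ Finset.Icc N (k + N - 1) := Finset.mem_Icc.mpr ⟨by omega, le_rfl⟩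
  have hratio := one_lt_div_sub_add_one hk2 hkM
  have hle := pow_le_one_div_mul_sum htop (hchoose _ htop) (fun j hj => (hchoose j hj).le) hs.le
  have hpow : 0 < s ^ (k + N - 1) := pow_pos hs _
  refine ⟨?_, by linarith, hchoose⟩
  rw [mul_assoc]
  nlinarith

theorem stmt_14 (N M k : ℕ) (hN : 1 ≤ N) (hM : 1 ≤ M) (hk2 : 2 ≤ k) (hkM : k ≤ M)
    (s : ℝ) (hs : 0 < s) :
    s ^ (k + N - 1) - (M : ℝ) / ((M - k + 1 : ℕ) : ℝ) * (1 / (Nat.choose (M + N) (k + N - 1) : ℝ))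
        * ∑ j ∈ Finset.Icc N (k + N - 1), (Nat.choose (M + N) j : ℝ) * s ^ j < 0
    ∧ 1 - (M : ℝ) / ((M - k + 1 : ℕ) : ℝ) < 0
    ∧ ∀ j ∈ Finset.Icc N (k + N - 1), 0 < (Nat.choose (M + N) j : ℝ) :=
  stmt_14_general N M k hk2 hkM s hs
end

section
/- Let d = C(M+N,N) and let V ⊂ S^{2d-1} ⊂ ℂ^d be the set of coefficient vectors (in the orthonormal monomial basis e_α) of the normalized reproducing kernels e^{iθ}(1+z·conj(w))^M/(1+|w|²)^{M/2}, θ ∈ ℝ, w ∈ ℂ^N. Then at the point X₀ = (1,0,…,0) (coefficients of the constant polynomial 1), the tangent space to V consists exactly of vectors Y = (Y_α) with Re Y₀ = 0 and Y_α = 0 for all |α| ≥ 2, so V has real dimension 2N+1. -/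
/-!
The point `X₀` is the kernel with `θ = 0`, `w = 0`, and on `V` the constant coefficient has
modulus `(1 + ‖w‖²)^(-M/2) ≤ 1`. Along a curve in `V` through `X₀` the real part of the
constant coefficient is therefore maximal at `t = 0`, so its derivative vanishes; moreover each
coefficient of degree `≥ 2` is bounded by a multiple of `1 - Re X₀(t)`, hence is `o(t)` and has
zero derivative. Conversely the curves `t ↦ e^{itc} K_{tv}` realise every vector whose constant
coefficient is `ic` and whose linear coefficients are `√M · conj v`. These vectors are
parametrised injectively by `(c, z) ∈ ℝ × ℂ^N`, which gives the real dimension `2N + 1`.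
-/

open MeasureTheory

/-- The (finite) set of multi-indices `α ∈ ℕ^N` with `|α| ≤ M`. -/
def multiIndexSet (N M : ℕ) : Finset (Fin N → ℕ) :=
  (Fintype.piFinset fun _ : Fin N => Finset.range (M + 1)).filter fun α => ∑ i, α i ≤ M

/-- The multinomial coefficient `C(M, α)` as a real number. -/
noncomputable def multinom (N M : ℕ) (α : Fin N → ℕ) : ℝ :=
  (M.factorial : ℝ) / (((∏ i, (α i).factorial : ℕ) : ℝ) * ((M - ∑ i, α i).factorial : ℕ))

/-- The set `V ⊂ ℂ^d` of coefficient vectors (in the orthonormal monomial basis `e_α`)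
of the normalized reproducing kernels `e^{iθ}(1 + z·conj w)^M/(1+|w|²)^{M/2}`. -/
def kernelCoeffSet (N M : ℕ) :
    Set (EuclideanSpace ℂ (multiIndexSet N M)) :=
  {Xc | ∃ (θ : ℝ) (w : EuclideanSpace ℂ (Fin N)), ∀ a : multiIndexSet N M,
    Xc a = Complex.exp (θ * Complex.I) * (Real.sqrt (multinom N M a) : ℂ)
      * (∏ i, (starRingEnd ℂ) (w i) ^ ((a : Fin N → ℕ) i))
      / ((((1 + ‖w‖ ^ 2) ^ ((M : ℝ) / 2)) : ℝ) : ℂ)}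

/-- The coefficient vector of the constant polynomial `1` (the point `X₀ = (1,0,…,0)`). -/
noncomputable def basePoint (N M : ℕ) : EuclideanSpace ℂ (multiIndexSet N M) :=
  WithLp.toLp 2 (fun a => if (a : Fin N → ℕ) = 0 then 1 else 0)

open Filter Asymptotics Topology ComplexConjugate

theorem hasDerivAt_piLp {𝕜 ι : Type*} [NontriviallyNormedField 𝕜] [Fintype ι] {E : ι → Type*}
    [∀ i, NormedAddCommGroup (E i)] [∀ i, NormedSpace 𝕜 (E i)] {p : ENNReal} [Fact (1 ≤ p)]
    {φ : 𝕜 → PiLp p E} {φ' : PiLp p E} {x : 𝕜} :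
    HasDerivAt φ φ' x ↔ ∀ i, HasDerivAt (fun t => φ t i) (φ' i) x := by
  simp only [hasDerivAt_iff_hasFDerivAt, ← hasFDerivWithinAt_univ, hasFDerivWithinAt_piLp]
  rfl

theorem HasDerivAt.eq_zero_of_isBigO {𝕜 E F : Type*} [NontriviallyNormedField 𝕜]
    [NormedAddCommGroup E] [NormedSpace 𝕜 E] [NormedAddCommGroup F] [NormedSpace 𝕜 F]
    {f : 𝕜 → E} {g : 𝕜 → F} {f' : E} {x : 𝕜}
    (hf : HasDerivAt f f' x) (hg : HasDerivAt g 0 x) (hfx : f x = 0) (hgx : g x = 0)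
    (hfg : f =O[𝓝 x] g) : f' = 0 := by
  refine hf.unique (hasDerivAt_iff_isLittleO.2 ?_)
  have := hasDerivAt_iff_isLittleO.1 hg
  simp only [hgx, hfx, sub_zero, smul_zero] at this ⊢
  exact hfg.trans_isLittleO this

theorem exists_eq_single_of_sum_eq_one {ι : Type*} [Fintype ι] [DecidableEq ι] {a : ι → ℕ}
    (h : ∑ i, a i = 1) : ∃ j, a = Pi.single j 1 := by
  obtain ⟨j, hj⟩ := (Finsupp.sum_eq_one_iff (Finsupp.equivFunOnFinite.symm a)).1
    (by rwa [Finsupp.sum_fintype _ _ (fun _ => rfl)])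
  exact ⟨j, by simpa [Finsupp.single_eq_pi_single] using congrArg DFunLike.coe hj⟩

lemma Complex.one_sub_norm_sq_le (z : ℂ) (hz : ‖z‖ ≤ 1) : 1 - ‖z‖ ^ 2 ≤ 2 * (1 - z.re) := by
  nlinarith [Complex.re_le_norm z, norm_nonneg z]

theorem eq_zero_or_exists_eq_single_or_two_le_sum {ι : Type*} [Fintype ι] [DecidableEq ι]
    (a : ι → ℕ) : a = 0 ∨ (∃ j, a = Pi.single j 1) ∨ 2 ≤ ∑ i, a i := by
  rcases Nat.lt_or_ge (∑ i, a i) 2 with h | h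
  · interval_cases hs : ∑ i, a i
    · exact Or.inl (funext fun i => Finset.sum_eq_zero_iff.1 hs i (Finset.mem_univ i))
    · exact Or.inr (Or.inl (exists_eq_single_of_sum_eq_one hs))
  · exact Or.inr (Or.inr h)

section MultiIndex

variable {N M : ℕ}

lemma zero_mem_multiIndexSet (N M : ℕ) : (0 : Fin N → ℕ) ∈ multiIndexSet N M := by
  simp [multiIndexSet]

lemma mem_multiIndexSet_of_sum_le {a : Fin N → ℕ} (h : ∑ i, a i ≤ M) : a ∈ multiIndexSet N M := by
  simp only [multiIndexSet, Finset.mem_filter, Fintype.mem_piFinset, Finset.mem_range]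
  exact ⟨fun i => Nat.lt_succ_of_le ((Finset.single_le_sum (fun k _ => Nat.zero_le (a k))
    (Finset.mem_univ i)).trans h), h⟩

lemma sum_le_of_mem_multiIndexSet {a : Fin N → ℕ} (h : a ∈ multiIndexSet N M) : ∑ i, a i ≤ M :=
  (Finset.mem_filter.1 h).2

def zeroIndex (N M : ℕ) : multiIndexSet N M := ⟨0, zero_mem_multiIndexSet N M⟩

def unitIndex (hM : 1 ≤ M) (j : Fin N) : multiIndexSet N M :=
  ⟨Pi.single j 1, mem_multiIndexSet_of_sum_le (by simpa using hM)⟩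

lemma multinom_nonneg (α : Fin N → ℕ) : 0 ≤ multinom N M α := by
  unfold multinom; positivity

lemma multinom_zero : multinom N M 0 = 1 := by
  simp [multinom, Nat.factorial_ne_zero]

lemma multinom_single (hM : 1 ≤ M) (j : Fin N) : multinom N M (Pi.single j 1) = M := by
  have hprod : ∏ i, ((Pi.single j 1 : Fin N → ℕ) i).factorial = 1 :=
    Finset.prod_eq_one fun i _ => by rcases eq_or_ne i j with rfl | hij <;> simp [*]
  rw [multinom, hprod, Finset.sum_pi_single', if_pos (Finset.mem_univ j),
    ← Nat.mul_factorial_pred (by omega : M ≠ 0)]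
  push_cast
  field_simp

end MultiIndex

section KernelCoeff

variable {N M : ℕ}

noncomputable def kernelCoeff (N M : ℕ) (θ : ℝ) (w : EuclideanSpace ℂ (Fin N)) :
    EuclideanSpace ℂ (multiIndexSet N M) :=
  WithLp.toLp 2 fun a => Complex.exp (θ * Complex.I) * (Real.sqrt (multinom N M a) : ℂ)
    * (∏ i, conj (w i) ^ ((a : Fin N → ℕ) i)) / ((((1 + ‖w‖ ^ 2) ^ ((M : ℝ) / 2)) : ℝ) : ℂ)

lemma mem_kernelCoeffSet_iff {x : EuclideanSpace ℂ (multiIndexSet N M)} :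
    x ∈ kernelCoeffSet N M ↔ ∃ θ w, kernelCoeff N M θ w = x :=
  ⟨fun ⟨θ, w, h⟩ => ⟨θ, w, PiLp.ext fun a => (h a).symm⟩,
    fun ⟨θ, w, h⟩ => ⟨θ, w, fun _ => h ▸ rfl⟩⟩

lemma basePoint_apply (a : multiIndexSet N M) :
    basePoint N M a = if (a : Fin N → ℕ) = 0 then 1 else 0 := rfl

lemma kernelCoeff_zero_zero : kernelCoeff N M 0 0 = basePoint N M := by
  refine PiLp.ext fun a => ?_
  by_cases ha : (a : Fin N → ℕ) = 0
  · simp [kernelCoeff, basePoint_apply, ha, multinom_zero]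
  · obtain ⟨i, hi⟩ := Function.ne_iff.1 ha
    simp [kernelCoeff, basePoint_apply, ha, Finset.prod_eq_zero_iff]
    exact Or.inr ⟨i, by simpa using hi⟩

lemma kernelCoeff_line_apply (c t : ℝ) (v : EuclideanSpace ℂ (Fin N)) (a : multiIndexSet N M) :
    kernelCoeff N M (t * c) (t • v) a
      = (Real.sqrt (multinom N M a) * ∏ i, conj (v i) ^ ((a : Fin N → ℕ) i))
        * (Complex.exp (↑(t * c) * Complex.I) / (((1 + t ^ 2 * ‖v‖ ^ 2) ^ ((M : ℝ) / 2) : ℝ) : ℂ)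
          * (t : ℂ) ^ ∑ i, (a : Fin N → ℕ) i) := by
  have hnorm : ‖t • v‖ ^ 2 = t ^ 2 * ‖v‖ ^ 2 := by rw [norm_smul, mul_pow, Real.norm_eq_abs, sq_abs]
  have hprod : ∏ i, conj ((t • v) i) ^ ((a : Fin N → ℕ) i)
      = (t : ℂ) ^ (∑ i, (a : Fin N → ℕ) i) * ∏ i, conj (v i) ^ ((a : Fin N → ℕ) i) := by
    simp [← Finset.prod_pow_eq_pow_sum, ← Finset.prod_mul_distrib, Complex.real_smul, mul_pow]
  rw [kernelCoeff, PiLp.toLp_apply, hnorm, hprod]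
  ring

lemma norm_kernelCoeff_apply_sq (θ : ℝ) (w : EuclideanSpace ℂ (Fin N)) (a : multiIndexSet N M) :
    ‖kernelCoeff N M θ w a‖ ^ 2
      = multinom N M a * (∏ i, ‖w i‖ ^ ((a : Fin N → ℕ) i)) ^ 2 / (1 + ‖w‖ ^ 2) ^ M := by
  have hpos : 0 < 1 + ‖w‖ ^ 2 := by positivity
  have hden : ((1 + ‖w‖ ^ 2) ^ ((M : ℝ) / 2)) ^ 2 = (1 + ‖w‖ ^ 2) ^ M := by
    rw [← Real.rpow_natCast _ 2, ← Real.rpow_mul hpos.le, ← Real.rpow_natCast _ M]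
    ring_nf
  simp only [kernelCoeff, PiLp.toLp_apply, norm_div, norm_mul, Complex.norm_exp_ofReal_mul_I,
    Complex.norm_real, norm_prod, norm_pow, Complex.norm_conj, Real.norm_eq_abs,
    abs_of_nonneg (Real.sqrt_nonneg _), abs_of_pos (Real.rpow_pos_of_pos hpos _)]
  rw [div_pow, mul_pow, one_mul, Real.sq_sqrt (multinom_nonneg _), hden]

lemma norm_kernelCoeff_zeroIndex_sq (θ : ℝ) (w : EuclideanSpace ℂ (Fin N)) :
    ‖kernelCoeff N M θ w (zeroIndex N M)‖ ^ 2 = ((1 + ‖w‖ ^ 2) ^ M)⁻¹ := by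
  simp [norm_kernelCoeff_apply_sq, zeroIndex, multinom_zero]

lemma norm_kernelCoeff_zeroIndex_le_one (θ : ℝ) (w : EuclideanSpace ℂ (Fin N)) :
    ‖kernelCoeff N M θ w (zeroIndex N M)‖ ≤ 1 := by
  refine (sq_le_one_iff₀ (norm_nonneg _)).1 ?_
  rw [norm_kernelCoeff_zeroIndex_sq]
  exact inv_le_one_of_one_le₀ (one_le_pow₀ (by simp))

lemma norm_kernelCoeff_apply_le (θ : ℝ) (w : EuclideanSpace ℂ (Fin N)) (a : multiIndexSet N M)
    (ha : 2 ≤ ∑ i, (a : Fin N → ℕ) i) :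
    ‖kernelCoeff N M θ w a‖
      ≤ Real.sqrt (multinom N M a) * (1 - ‖kernelCoeff N M θ w (zeroIndex N M)‖ ^ 2) := by
  set k := ∑ i, (a : Fin N → ℕ) i
  set s := ‖w‖ ^ 2
  set q := s / (1 + s)
  have hs : 0 ≤ s := by positivity
  have hq : q ≤ 1 := div_le_one_of_le₀ (by linarith) (by linarith)
  have hkM : k ≤ M := sum_le_of_mem_multiIndexSet a.2
  have hprod : (∏ i, ‖w i‖ ^ ((a : Fin N → ℕ) i)) ^ 2 ≤ s ^ k := by
    rw [← pow_mul, mul_comm, pow_mul, ← Finset.prod_pow_eq_pow_sum]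
    gcongr with i
    exact PiLp.norm_apply_le w i
  have hsq : ‖kernelCoeff N M θ w a‖ ^ 2 ≤ multinom N M a * q ^ 2 := calc
    _ ≤ multinom N M a * s ^ k / (1 + s) ^ k := by
      rw [norm_kernelCoeff_apply_sq]
      exact div_le_div₀ (mul_nonneg (multinom_nonneg _) (by positivity))
        (mul_le_mul_of_nonneg_left hprod (multinom_nonneg _)) (by positivity)
        (pow_le_pow_right₀ (by linarith) hkM)
    _ = multinom N M a * q ^ k := by rw [div_pow, mul_div_assoc]
    _ ≤ multinom N M a * q ^ 2 :=
      mul_le_mul_of_nonneg_left (pow_le_pow_of_le_one (by positivity) hq ha) (multinom_nonneg _)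
  have hdefect : q ≤ 1 - ‖kernelCoeff N M θ w (zeroIndex N M)‖ ^ 2 := by
    rw [norm_kernelCoeff_zeroIndex_sq]
    have : ((1 + s) ^ M)⁻¹ ≤ (1 + s)⁻¹ :=
      inv_anti₀ (by positivity) (le_self_pow₀ (by linarith) (by omega))
    have : 1 - (1 + s)⁻¹ = q := by simp only [q]; field_simp; ring
    linarith
  calc ‖kernelCoeff N M θ w a‖ = Real.sqrt (‖kernelCoeff N M θ w a‖ ^ 2) :=
        (Real.sqrt_sq (norm_nonneg _)).symm
    _ ≤ Real.sqrt (multinom N M a * q ^ 2) := Real.sqrt_le_sqrt hsq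
    _ = Real.sqrt (multinom N M a) * q := by
        rw [Real.sqrt_mul (multinom_nonneg _), Real.sqrt_sq (by positivity)]
    _ ≤ _ := mul_le_mul_of_nonneg_left hdefect (Real.sqrt_nonneg _)

end KernelCoeff

section Forward

variable {N M : ℕ}

lemma re_zeroIndex_le_one {x : EuclideanSpace ℂ (multiIndexSet N M)}
    (hx : x ∈ kernelCoeffSet N M) : (x (zeroIndex N M)).re ≤ 1 := by
  obtain ⟨θ, w, rfl⟩ := mem_kernelCoeffSet_iff.1 hx
  exact (Complex.re_le_norm _).trans (norm_kernelCoeff_zeroIndex_le_one θ w)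

lemma norm_apply_le_of_mem_kernelCoeffSet {x : EuclideanSpace ℂ (multiIndexSet N M)}
    (hx : x ∈ kernelCoeffSet N M) (a : multiIndexSet N M) (ha : 2 ≤ ∑ i, (a : Fin N → ℕ) i) :
    ‖x a‖ ≤ 2 * Real.sqrt (multinom N M a) * (1 - (x (zeroIndex N M)).re) := by
  obtain ⟨θ, w, rfl⟩ := mem_kernelCoeffSet_iff.1 hx
  rw [mul_comm 2, mul_assoc]
  exact (norm_kernelCoeff_apply_le θ w a ha).trans (mul_le_mul_of_nonneg_left
    (Complex.one_sub_norm_sq_le _ (norm_kernelCoeff_zeroIndex_le_one θ w)) (Real.sqrt_nonneg _))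

theorem tangent_conditions_of_hasDerivAt {γ : ℝ → EuclideanSpace ℂ (multiIndexSet N M)}
    {Y : EuclideanSpace ℂ (multiIndexSet N M)} (h0 : γ 0 = basePoint N M)
    (hγ : ∀ t, γ t ∈ kernelCoeffSet N M) (hY : HasDerivAt γ Y 0) :
    (∀ a : multiIndexSet N M, (a : Fin N → ℕ) = 0 → (Y a).re = 0)
      ∧ ∀ a : multiIndexSet N M, 2 ≤ ∑ i, (a : Fin N → ℕ) i → Y a = 0 := by
  have hcoord : ∀ a, HasDerivAt (fun t => γ t a) (Y a) 0 := hasDerivAt_piLp.1 hY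
  set z := zeroIndex N M
  have hγz : (γ 0 z).re = 1 := by simp [h0, basePoint_apply, z, zeroIndex]
  have hderiv_re : HasDerivAt (fun t => (γ t z).re) (Y z).re 0 :=
    Complex.reCLM.hasFDerivAt.comp_hasDerivAt 0 (hcoord z)
  have hre : (Y z).re = 0 := by
    refine IsLocalMax.hasDerivAt_eq_zero (Eventually.of_forall fun t => ?_) hderiv_re
    simpa [hγz] using re_zeroIndex_le_one (hγ t)
  refine ⟨fun a ha => ?_, fun a ha => ?_⟩
  · obtain rfl : a = z := Subtype.ext ha
    exact hre
  refine (hcoord a).eq_zero_of_isBigO (g := fun t => 1 - (γ t z).re)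
    (by simpa [hre] using hderiv_re.const_sub 1) ?_ (by simp [hγz]) ?_
  · have : (a : Fin N → ℕ) ≠ 0 := by rintro h; simp [h] at ha
    simp [h0, basePoint_apply, this]
  · refine IsBigO.of_bound (2 * Real.sqrt (multinom N M a)) (Eventually.of_forall fun t => ?_)
    exact (norm_apply_le_of_mem_kernelCoeffSet (hγ t) a ha).trans
      (mul_le_mul_of_nonneg_left (le_abs_self _) (by positivity))

end Forward

section TangentParam

variable {N M : ℕ}

/-- At `a = Pi.single j 1` the sum `∑ i, a i * z i` is `z j`; it is written as a sum so that it
is visibly linear in `z`. -/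
noncomputable def tangentParam (N M : ℕ) :
    ℝ × (Fin N → ℂ) →ₗ[ℝ] EuclideanSpace ℂ (multiIndexSet N M) where
  toFun p := WithLp.toLp 2 fun a =>
    if (a : Fin N → ℕ) = 0 then p.1 * Complex.I
    else if ∑ i, (a : Fin N → ℕ) i = 1 then ∑ i, ((a : Fin N → ℕ) i : ℂ) * p.2 i else 0
  map_add' p q := by
    refine PiLp.ext fun a => ?_
    simp only [Prod.fst_add, Prod.snd_add, Pi.add_apply, PiLp.add_apply]
    split_ifs <;> simp [mul_add, add_mul, Finset.sum_add_distrib]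
  map_smul' r p := by
    refine PiLp.ext fun a => ?_
    simp only [Prod.smul_fst, Prod.smul_snd, Pi.smul_apply, PiLp.smul_apply,
      RingHom.id_apply]
    split_ifs <;> simp [Complex.real_smul, Finset.mul_sum, mul_assoc, mul_left_comm]

lemma tangentParam_apply (p : ℝ × (Fin N → ℂ)) (a : multiIndexSet N M) :
    tangentParam N M p a = if (a : Fin N → ℕ) = 0 then p.1 * Complex.I
      else if ∑ i, (a : Fin N → ℕ) i = 1 then ∑ i, ((a : Fin N → ℕ) i : ℂ) * p.2 i else 0 :=
  rfl

lemma tangentParam_apply_unitIndex (hM : 1 ≤ M) (p : ℝ × (Fin N → ℂ)) (j : Fin N) :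
    tangentParam N M p (unitIndex hM j) = p.2 j := by
  simp [tangentParam_apply, unitIndex, Pi.single_apply]

lemma range_tangentParam (hM : 1 ≤ M) :
    Set.range (tangentParam N M)
      = {Y | (∀ a : multiIndexSet N M, (a : Fin N → ℕ) = 0 → (Y a).re = 0)
          ∧ ∀ a : multiIndexSet N M, 2 ≤ ∑ i, (a : Fin N → ℕ) i → Y a = 0} := by
  ext Y
  constructor
  · rintro ⟨p, rfl⟩
    refine ⟨fun a ha => by simp [tangentParam_apply, ha], fun a ha => ?_⟩
    have : (a : Fin N → ℕ) ≠ 0 := by rintro h; simp [h] at ha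
    simp [tangentParam_apply, this, show ∑ i, (a : Fin N → ℕ) i ≠ 1 by omega]
  · rintro ⟨hre, hhigh⟩
    refine ⟨((Y (zeroIndex N M)).im, fun j => Y (unitIndex hM j)), PiLp.ext fun a => ?_⟩
    rcases eq_zero_or_exists_eq_single_or_two_le_sum (a : Fin N → ℕ) with ha | ⟨j, ha⟩ | ha
    · obtain rfl : a = zeroIndex N M := Subtype.ext ha
      apply Complex.ext <;> simp [tangentParam_apply, ha, hre _ ha]
    · obtain rfl : a = unitIndex hM j := Subtype.ext ha
      exact tangentParam_apply_unitIndex hM _ j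
    · rw [hhigh a ha]
      have : (a : Fin N → ℕ) ≠ 0 := by rintro h; simp [h] at ha
      simp [tangentParam_apply, this, show ∑ i, (a : Fin N → ℕ) i ≠ 1 by omega]

lemma tangentParam_injective (hM : 1 ≤ M) : Function.Injective (tangentParam N M) := by
  intro p q h
  have hc : p.1 * Complex.I = q.1 * Complex.I := by
    simpa [tangentParam_apply, zeroIndex] using congrArg (· (zeroIndex N M)) h
  refine Prod.ext (by simpa using hc) (funext fun j => ?_)
  simpa [tangentParam_apply_unitIndex] using congrArg (· (unitIndex hM j)) h

lemma finrank_range_tangentParam (hM : 1 ≤ M) :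
    Module.finrank ℝ (LinearMap.range (tangentParam N M)) = 2 * N + 1 := by
  rw [LinearMap.finrank_range_of_inj (tangentParam_injective hM), Module.finrank_prod,
    Module.finrank_self, Module.finrank_pi_fintype]
  simp [Complex.finrank_real_complex]
  ring

end TangentParam

section Backward

variable {N M : ℕ}

lemma hasDerivAt_cexp_div_rpow_zero (c s p : ℝ) :
    HasDerivAt (fun t : ℝ => Complex.exp (↑(t * c) * Complex.I) / (((1 + t ^ 2 * s) ^ p : ℝ) : ℂ))
      (c * Complex.I) 0 := by
  have hexp : HasDerivAt (fun t : ℝ => Complex.exp (↑(t * c) * Complex.I)) (c * Complex.I) 0 := by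
    simpa using (((hasDerivAt_id (0 : ℝ)).mul_const c).ofReal_comp.mul_const Complex.I).cexp
  have hden : HasDerivAt (fun t : ℝ => (((1 + t ^ 2 * s) ^ p : ℝ) : ℂ)) 0 0 := by
    simpa using ((((hasDerivAt_pow 2 (0 : ℝ)).mul_const s).const_add 1).rpow_const
      (p := p) (by norm_num)).ofReal_comp
  exact (hexp.div hden (by simp)).congr_deriv (by simp)

lemma hasDerivAt_ofReal_pow (k : ℕ) (x : ℝ) :
    HasDerivAt (fun t : ℝ => (t : ℂ) ^ k) (k * (x : ℂ) ^ (k - 1)) x := by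
  simpa using (hasDerivAt_pow k (x : ℂ)).comp_ofReal

theorem hasDerivAt_kernelCoeff_line (c : ℝ) (v : EuclideanSpace ℂ (Fin N)) :
    HasDerivAt (fun t => kernelCoeff N M (t * c) (t • v))
      (tangentParam N M (c, fun i => Real.sqrt M * conj (v i))) 0 := by
  refine hasDerivAt_piLp.2 fun a => ?_
  simp only [kernelCoeff_line_apply]
  refine (((hasDerivAt_cexp_div_rpow_zero c (‖v‖ ^ 2) (M / 2)).mul
    (hasDerivAt_ofReal_pow _ 0)).const_mul ((Real.sqrt (multinom N M a) : ℂ)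
      * ∏ i, conj (v i) ^ ((a : Fin N → ℕ) i))).congr_deriv ?_
  rw [tangentParam_apply]
  rcases eq_zero_or_exists_eq_single_or_two_le_sum (a : Fin N → ℕ) with ha | ⟨j, ha⟩ | ha
  · simp [ha, multinom_zero]
  · have hM : 1 ≤ M := by simpa [ha] using sum_le_of_mem_multiIndexSet a.2
    simp [ha, multinom_single hM, Pi.single_apply]
  · have h0 : (a : Fin N → ℕ) ≠ 0 := by rintro h; simp [h] at ha
    have hk0 : ∑ i, (a : Fin N → ℕ) i ≠ 0 := by omega
    have hk1 : ∑ i, (a : Fin N → ℕ) i - 1 ≠ 0 := by omega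
    simp [h0, show ∑ i, (a : Fin N → ℕ) i ≠ 1 by omega, zero_pow hk0, zero_pow hk1]

theorem exists_curve_hasDerivAt_tangentParam (hM : 1 ≤ M) (p : ℝ × (Fin N → ℂ)) :
    ∃ γ : ℝ → EuclideanSpace ℂ (multiIndexSet N M), γ 0 = basePoint N M
      ∧ (∀ t, γ t ∈ kernelCoeffSet N M) ∧ HasDerivAt γ (tangentParam N M p) 0 := by
  set v : EuclideanSpace ℂ (Fin N) := WithLp.toLp 2 fun i => conj (p.2 i) / Real.sqrt M
  have hv : (fun i => Real.sqrt M * conj (v i)) = p.2 := by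
    have : (Real.sqrt M : ℂ) ≠ 0 := by exact_mod_cast (Real.sqrt_pos.2 (by exact_mod_cast hM)).ne'
    funext i
    simp [v, mul_div_cancel₀ _ this]
  refine ⟨fun t => kernelCoeff N M (t * p.1) (t • v), by simpa using kernelCoeff_zero_zero,
    fun t => mem_kernelCoeffSet_iff.2 ⟨_, _, rfl⟩, ?_⟩
  simpa [hv] using hasDerivAt_kernelCoeff_line (M := M) p.1 v

end Backward

theorem stmt_17_general (N M : ℕ) (hM : 1 ≤ M) :
    letI T : Set (EuclideanSpace ℂ (multiIndexSet N M)) :=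
      {Y | ∃ γ : ℝ → EuclideanSpace ℂ (multiIndexSet N M),
        γ 0 = basePoint N M ∧ (∀ t, γ t ∈ kernelCoeffSet N M)
          ∧ DifferentiableAt ℝ γ 0 ∧ deriv γ 0 = Y}
    T = {Y | (∀ a : multiIndexSet N M, (a : Fin N → ℕ) = 0 → (Y a).re = 0)
          ∧ ∀ a : multiIndexSet N M, 2 ≤ ∑ i, (a : Fin N → ℕ) i → Y a = 0}
    ∧ Module.finrank ℝ (Submodule.span ℝ T) = 2 * N + 1 := by
  have hT : {Y | ∃ γ : ℝ → EuclideanSpace ℂ (multiIndexSet N M),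
      γ 0 = basePoint N M ∧ (∀ t, γ t ∈ kernelCoeffSet N M)
        ∧ DifferentiableAt ℝ γ 0 ∧ deriv γ 0 = Y} = Set.range (tangentParam N M) := by
    ext Y
    constructor
    · rintro ⟨γ, h0, hγ, hdiff, rfl⟩
      rw [range_tangentParam hM]
      exact tangent_conditions_of_hasDerivAt h0 hγ hdiff.hasDerivAt
    · rintro ⟨p, rfl⟩
      obtain ⟨γ, h0, hγ, hderiv⟩ := exists_curve_hasDerivAt_tangentParam hM p
      exact ⟨γ, h0, hγ, hderiv.differentiableAt, hderiv.deriv⟩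
  refine ⟨hT.trans (range_tangentParam hM), ?_⟩
  rw [hT, ← LinearMap.coe_range, Submodule.span_eq, finrank_range_tangentParam hM]

theorem stmt_17 (N M : ℕ) (hN : 1 ≤ N) (hM : 1 ≤ M) :
    letI T : Set (EuclideanSpace ℂ (multiIndexSet N M)) :=
      {Y | ∃ γ : ℝ → EuclideanSpace ℂ (multiIndexSet N M),
        γ 0 = basePoint N M ∧ (∀ t, γ t ∈ kernelCoeffSet N M)
          ∧ DifferentiableAt ℝ γ 0 ∧ deriv γ 0 = Y}
    T = {Y | (∀ a : multiIndexSet N M, (a : Fin N → ℕ) = 0 → (Y a).re = 0)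
          ∧ ∀ a : multiIndexSet N M, 2 ≤ ∑ i, (a : Fin N → ℕ) i → Y a = 0}
    ∧ Module.finrank ℝ (Submodule.span ℝ T) = 2 * N + 1 :=
  stmt_17_general N M hM
end
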